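/- arXiv:2308.15336 — 5 statements merged into one kernel-verified Lean document; each statement's English description precedes it below -/
import Mathlib

section
/- Let m₃(s) = f₀ + gᵀs + ½ sᵀHs + (1/6)T[s]³ + (σ/4)‖s‖⁴ with σ > 0. Define λ₀ := max{−λ_min(H), 0}, Λ₀ := max over unit u of T[u]³, and let r_c > 0 satisfy σ/4 = ‖g‖/r_c³ + λ₀/(2 r_c²) + Λ₀/(6 r_c). Then for every s with ‖s‖ > r_c, m₃(s) > f₀ = m₃(0). Consequently, any global minimizer s* of m₃ satisfies ‖s*‖ ≤ r_c. -/
open scoped RealInnerProductSpace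


private lemma aux_poly (A B C σ rc t : ℝ) (hA : 0 ≤ A) (hB : 0 ≤ B) (hC : 0 ≤ C)
    (hσ : 0 < σ) (hrc : 0 < rc) (hs : rc < t)
    (hsec : σ / 4 = A / rc^3 + B / (2 * rc^2) + C / (6 * rc)) :
    A * t + B/2 * t^2 + C/6 * t^3 < σ/4 * t^4 := by
  have ht0 : 0 < t := lt_trans hrc hs
  have expand : σ/4 * t^4
      = A * t^4 / rc^3 + B/2 * (t^4 / rc^2) + C/6 * (t^4 / rc) := by
    rw [hsec]; field_simp
  have hrc3 : rc^3 < t^3 := pow_lt_pow_left₀ hs hrc.le (by norm_num)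
  have hrc2 : rc^2 < t^2 := pow_lt_pow_left₀ hs hrc.le (by norm_num)
  have e1 : A * t ≤ A * t^4 / rc^3 := by
    rw [le_div_iff₀ (by positivity)]
    nlinarith [mul_nonneg (mul_nonneg hA ht0.le) (sub_nonneg.mpr hrc3.le)]
  have e2 : B/2 * t^2 ≤ B/2 * (t^4 / rc^2) := by
    apply mul_le_mul_of_nonneg_left _ (by linarith)
    rw [le_div_iff₀ (by positivity)]
    nlinarith [sq_nonneg t]
  have e3 : C/6 * t^3 ≤ C/6 * (t^4 / rc) := by
    apply mul_le_mul_of_nonneg_left _ (by linarith)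
    rw [le_div_iff₀ hrc]
    nlinarith [pow_pos ht0 3]
  have hpos : 0 < A ∨ 0 < B ∨ 0 < C := by
    by_contra h
    push_neg at h
    obtain ⟨h1, h2, h3⟩ := h
    have : A = 0 := le_antisymm h1 hA
    have : B = 0 := le_antisymm h2 hB
    have : C = 0 := le_antisymm h3 hC
    rw [‹A = 0›, ‹B = 0›, ‹C = 0›] at hsec
    simp at hsec
    linarith
  rw [expand]
  rcases hpos with hc | hc | hc
  · have e1' : A * t < A * t^4 / rc^3 := by
      rw [lt_div_iff₀ (by positivity)]
      nlinarith [mul_pos hc ht0]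
    linarith
  · have e2' : B/2 * t^2 < B/2 * (t^4 / rc^2) := by
      apply mul_lt_mul_of_pos_left _ (by linarith)
      rw [lt_div_iff₀ (by positivity)]
      nlinarith [pow_pos ht0 2]
    linarith
  · have e3' : C/6 * t^3 < C/6 * (t^4 / rc) := by
      apply mul_lt_mul_of_pos_left _ (by linarith)
      rw [lt_div_iff₀ hrc]
      nlinarith [pow_pos ht0 3]
    linarith

/-- with `lam₀ := max{−λ_min(H), 0}` (i.e. `uᵀHu ≥ −lam₀‖u‖²`),
`Λ₀` the max of `T[u]³` over unit vectors, and `r_c > 0` solving the secular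
equation `σ/4 = ‖g‖/r_c³ + lam₀/(2r_c²) + Λ₀/(6r_c)`, every `s` with
`‖s‖ > r_c` satisfies `m₃(s) > f₀ = m₃(0)`; hence any global minimizer `s*`
of `m₃` satisfies `‖s*‖ ≤ r_c`. -/
theorem minimizer_norm_bound_m3 (n : ℕ) (f₀ σ lam₀ Λ₀ rc : ℝ) (hσ : 0 < σ)
    (g : EuclideanSpace ℝ (Fin n))
    (H : EuclideanSpace ℝ (Fin n) →L[ℝ] EuclideanSpace ℝ (Fin n))
    (hH : ∀ x y, ⟪H x, y⟫ = ⟪x, H y⟫)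
    (hlam₀ : 0 ≤ lam₀)
    (hHlb : ∀ u : EuclideanSpace ℝ (Fin n), -lam₀ * ‖u‖^2 ≤ ⟪u, H u⟫)
    (T : EuclideanSpace ℝ (Fin n) →L[ℝ] EuclideanSpace ℝ (Fin n) →L[ℝ]
        EuclideanSpace ℝ (Fin n) →L[ℝ] ℝ)
    (hT1 : ∀ u v w, T u v w = T v u w) (hT2 : ∀ u v w, T u v w = T u w v)
    (hΛ₀ : ∀ u : EuclideanSpace ℝ (Fin n), ‖u‖ = 1 → T u u u ≤ Λ₀)
    (m₃ : EuclideanSpace ℝ (Fin n) → ℝ)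
    (hm₃ : ∀ s, m₃ s = f₀ + ⟪g, s⟫ + (1/2) * ⟪s, H s⟫ + (1/6) * T s s s
        + (σ/4) * ‖s‖^4)
    (hrc : 0 < rc)
    (hsecular : σ / 4 = ‖g‖ / rc^3 + lam₀ / (2 * rc^2) + Λ₀ / (6 * rc)) :
    m₃ 0 = f₀ ∧
    (∀ s : EuclideanSpace ℝ (Fin n), rc < ‖s‖ → f₀ < m₃ s) ∧
    (∀ sstar : EuclideanSpace ℝ (Fin n),
      (∀ s, m₃ sstar ≤ m₃ s) → ‖sstar‖ ≤ rc) := by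
  have h0 : m₃ 0 = f₀ := by
    rw [hm₃]; simp
  have key : ∀ s : EuclideanSpace ℝ (Fin n), rc < ‖s‖ → f₀ < m₃ s := by
    intro s hs
    have ht0 : 0 < ‖s‖ := lt_trans hrc hs
    set t := ‖s‖ with ht
    have hg : -(‖g‖ * t) ≤ ⟪g, s⟫ := by
      have h1 := abs_real_inner_le_norm g s
      rw [abs_le] at h1
      linarith [h1.1]
    have hHs : -lam₀ * t^2 ≤ ⟪s, H s⟫ := hHlb s
    set u : EuclideanSpace ℝ (Fin n) := t⁻¹ • s with hu
    have hune : ‖u‖ = 1 := by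
      rw [hu, norm_smul, Real.norm_eq_abs, abs_of_pos (inv_pos.mpr ht0), ← ht]
      field_simp
    have hsu : s = t • u := by
      rw [hu, smul_smul, mul_inv_cancel₀ ht0.ne', one_smul]
    have hTsu : T s s s = t * (t * (t * T u u u)) := by
      conv_lhs => rw [hsu]
      simp [map_smul]
    have hTu1 : T u u u ≤ Λ₀ := hΛ₀ u hune
    have hTu2 : -(T u u u) ≤ Λ₀ := by
      have h := hΛ₀ (-u) (by rw [norm_neg]; exact hune)
      simpa using h
    have hΛnn : 0 ≤ Λ₀ := by linarith
    have hTs : -(Λ₀ * t^3) ≤ T s s s := by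
      rw [hTsu]
      nlinarith [pow_pos ht0 3, hTu2]
    have hgnn : (0:ℝ) ≤ ‖g‖ := norm_nonneg g
    have hq := aux_poly ‖g‖ lam₀ Λ₀ σ rc t hgnn hlam₀ hΛnn hσ hrc hs hsecular
    rw [hm₃, ← ht]
    linarith
  refine ⟨h0, key, ?_⟩
  intro sstar hmin
  by_contra h
  push_neg at h
  have h1 := key sstar h
  have h2 := hmin 0
  rw [h0] at h2
  linarith
end

section
/- Let M(s) = f + gᵀs + ½ sᵀHs + (1/6)T[s]³ + (σ/4)‖s‖⁴ and, for parameters a > 0 and d > L_H²/(18 a λ_c σ), where λ_min(H) ≥ λ_c > 0 and L_H bounds |T[u]³| over unit vectors u, define M₊(s) = f + gᵀs + (1+a)/2 · sᵀHs + (σ(1+d)/4)‖s‖⁴ and M₋(s) = f + gᵀs + (1−a)/2 · sᵀHs + (σ(1−d)/4)‖s‖⁴. Then M₋(s) ≤ M(s) ≤ M₊(s) for all s ∈ ℝⁿ, with equality only at s = 0. -/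
open scoped RealInnerProductSpace

/-- upper/lower bounds `M₋ ≤ M ≤ M₊` in the locally strictly convex
case `λ_min(H) ≥ λ_c > 0`, with equality only at `s = 0`. -/
theorem upper_lower_bound_strictly_convex (n : ℕ) (f σ a d lam_c L_H : ℝ)
    (hσ : 0 < σ) (ha : 0 < a) (hlamc : 0 < lam_c) (hLH : 0 ≤ L_H)
    (hd : L_H^2 / (18 * a * lam_c * σ) < d)
    (g : EuclideanSpace ℝ (Fin n))
    (H : EuclideanSpace ℝ (Fin n) →L[ℝ] EuclideanSpace ℝ (Fin n))
    (hH : ∀ x y, ⟪H x, y⟫ = ⟪x, H y⟫)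
    (hHlb : ∀ s : EuclideanSpace ℝ (Fin n), lam_c * ‖s‖^2 ≤ ⟪s, H s⟫)
    (T : EuclideanSpace ℝ (Fin n) →L[ℝ] EuclideanSpace ℝ (Fin n) →L[ℝ]
        EuclideanSpace ℝ (Fin n) →L[ℝ] ℝ)
    (hT1 : ∀ u v w, T u v w = T v u w) (hT2 : ∀ u v w, T u v w = T u w v)
    (hTbound : ∀ u : EuclideanSpace ℝ (Fin n), ‖u‖ = 1 → |T u u u| ≤ L_H)
    (M Mplus Mminus : EuclideanSpace ℝ (Fin n) → ℝ)
    (hM : ∀ s, M s = f + ⟪g, s⟫ + (1/2) * ⟪s, H s⟫ + (1/6) * T s s s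
        + (σ/4) * ‖s‖^4)
    (hMplus : ∀ s, Mplus s = f + ⟪g, s⟫ + ((1 + a)/2) * ⟪s, H s⟫
        + (σ * (1 + d)/4) * ‖s‖^4)
    (hMminus : ∀ s, Mminus s = f + ⟪g, s⟫ + ((1 - a)/2) * ⟪s, H s⟫
        + (σ * (1 - d)/4) * ‖s‖^4) :
    ∀ s : EuclideanSpace ℝ (Fin n),
      Mminus s ≤ M s ∧ M s ≤ Mplus s ∧
      (s ≠ 0 → Mminus s < M s ∧ M s < Mplus s) := by
  have hd0 : 0 < d := lt_of_le_of_lt (by positivity) hd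
  have hd' : L_H ^ 2 < d * (18 * a * lam_c * σ) := by
    rwa [div_lt_iff₀ (by positivity)] at hd
  -- cubic bound
  have hTcube : ∀ s : EuclideanSpace ℝ (Fin n), |T s s s| ≤ L_H * ‖s‖ ^ 3 := by
    intro s
    by_cases hs : s = 0
    · simp [hs]
    · have hns : 0 < ‖s‖ := norm_pos_iff.mpr hs
      set u : EuclideanSpace ℝ (Fin n) := ‖s‖⁻¹ • s with hu
      have hnu : ‖u‖ = 1 := by
        rw [hu, norm_smul, norm_inv, norm_norm, inv_mul_cancel₀ hns.ne']
      have hsu : s = ‖s‖ • u := by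
        rw [hu, smul_smul, mul_inv_cancel₀ hns.ne', one_smul]
      have hval : T s s s = ‖s‖ ^ 3 * T u u u := by
        conv_lhs => rw [hsu]
        simp [map_smul]
        ring
      have := hTbound u hnu
      rw [hval, abs_mul, abs_pow, abs_norm]
      calc ‖s‖ ^ 3 * |T u u u| ≤ ‖s‖ ^ 3 * L_H := by
            exact mul_le_mul_of_nonneg_left this (by positivity)
        _ = L_H * ‖s‖ ^ 3 := by ring
  -- key positivity
  have key : ∀ s : EuclideanSpace ℝ (Fin n), s ≠ 0 →
      0 < (a * lam_c / 2) * ‖s‖ ^ 2 - (L_H / 6) * ‖s‖ ^ 3 + (d * σ / 4) * ‖s‖ ^ 4 := by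
    intro s hs
    have ht : 0 < ‖s‖ := norm_pos_iff.mpr hs
    set t := ‖s‖
    nlinarith [sq_nonneg (d * σ * t ^ 2 / 2 - L_H * t / 6),
      mul_pos (pow_pos ht 2) (show 0 < d * (18 * a * lam_c * σ) - L_H ^ 2 by linarith),
      mul_pos hd0 hσ, pow_pos ht 2, pow_pos ht 4]
  intro s
  by_cases hs : s = 0
  · subst hs
    have h0 : T (0 : EuclideanSpace ℝ (Fin n)) 0 0 = 0 := by simp
    refine ⟨le_of_eq ?_, le_of_eq ?_, fun h => absurd rfl h⟩ <;>
      simp [hM, hMplus, hMminus, h0]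
  · have ht : 0 < ‖s‖ := norm_pos_iff.mpr hs
    have hcube := abs_le.mp (hTcube s)
    have hHs := hHlb s
    have hk := key s hs
    have hmul : 0 ≤ (a / 2) * (⟪s, H s⟫ - lam_c * ‖s‖ ^ 2) := by
      apply mul_nonneg (by positivity)
      linarith
    have h1 : M s < Mplus s := by
      rw [hM s, hMplus s]
      nlinarith [hcube.2]
    have h2 : Mminus s < M s := by
      rw [hM s, hMminus s]
      nlinarith [hcube.1]
    exact ⟨h2.le, h1.le, fun _ => ⟨h2, h1⟩⟩
end

section
/- Let M(s) = f + gᵀs + ½ sᵀHs + (1/6)T[s]³ + (σ/4)‖s‖⁴, with λ_min(H) in any range, and for p̃ > 0 and d > L_H²/(18 p̃ σ) define M₊(s) = f + gᵀs + ½ sᵀ(H + p̃ Iₙ)s + (σ(1+d)/4)‖s‖⁴ and M₋(s) = f + gᵀs + ½ sᵀ(H − p̃ Iₙ)s + (σ(1−d)/4)‖s‖⁴. Then M₋(s) ≤ M(s) ≤ M₊(s) for all s ∈ ℝⁿ, with equality only at s = 0. -/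
open scoped RealInnerProductSpace

/-- upper/lower bounds `M₋ ≤ M ≤ M₊` in the nearly convex case,
obtained by a perturbation `p̃ > 0` of the Hessian, with equality only at
`s = 0`. -/
theorem upper_lower_bound_nearly_convex (n : ℕ) (f σ ptilde d L_H : ℝ)
    (hσ : 0 < σ) (hp : 0 < ptilde) (hLH : 0 ≤ L_H)
    (hd : L_H^2 / (18 * ptilde * σ) < d)
    (g : EuclideanSpace ℝ (Fin n))
    (H : EuclideanSpace ℝ (Fin n) →L[ℝ] EuclideanSpace ℝ (Fin n))
    (hH : ∀ x y, ⟪H x, y⟫ = ⟪x, H y⟫)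
    (T : EuclideanSpace ℝ (Fin n) →L[ℝ] EuclideanSpace ℝ (Fin n) →L[ℝ]
        EuclideanSpace ℝ (Fin n) →L[ℝ] ℝ)
    (hT1 : ∀ u v w, T u v w = T v u w) (hT2 : ∀ u v w, T u v w = T u w v)
    (hTbound : ∀ u : EuclideanSpace ℝ (Fin n), ‖u‖ = 1 → |T u u u| ≤ L_H)
    (M Mplus Mminus : EuclideanSpace ℝ (Fin n) → ℝ)
    (hM : ∀ s, M s = f + ⟪g, s⟫ + (1/2) * ⟪s, H s⟫ + (1/6) * T s s s
        + (σ/4) * ‖s‖^4)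
    (hMplus : ∀ s, Mplus s = f + ⟪g, s⟫
        + (1/2) * (⟪s, H s⟫ + ptilde * ‖s‖^2)
        + (σ * (1 + d)/4) * ‖s‖^4)
    (hMminus : ∀ s, Mminus s = f + ⟪g, s⟫
        + (1/2) * (⟪s, H s⟫ - ptilde * ‖s‖^2)
        + (σ * (1 - d)/4) * ‖s‖^4) :
    ∀ s : EuclideanSpace ℝ (Fin n),
      Mminus s ≤ M s ∧ M s ≤ Mplus s ∧
      (s ≠ 0 → Mminus s < M s ∧ M s < Mplus s) := by
  have hd0 : 0 < d := lt_of_le_of_lt (div_nonneg (sq_nonneg _) (by positivity)) hd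
  have hdd : L_H ^ 2 < 18 * ptilde * σ * d := by
    have h18 : 0 < 18 * ptilde * σ := by positivity
    calc L_H ^ 2 = L_H ^ 2 / (18 * ptilde * σ) * (18 * ptilde * σ) := by
          field_simp
      _ < d * (18 * ptilde * σ) := by
          exact mul_lt_mul_of_pos_right hd h18
      _ = 18 * ptilde * σ * d := by ring
  have hTb : ∀ s : EuclideanSpace ℝ (Fin n), |T s s s| ≤ L_H * ‖s‖ ^ 3 := by
    intro s
    by_cases hs : s = 0
    · simp [hs]
    · have hns : (0:ℝ) < ‖s‖ := norm_pos_iff.mpr hs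
      set u : EuclideanSpace ℝ (Fin n) := ‖s‖⁻¹ • s with hu
      have hnu : ‖u‖ = 1 := by
        rw [hu, norm_smul, norm_inv, norm_norm, inv_mul_cancel₀ hns.ne']
      have hTu : T u u u = ‖s‖⁻¹ ^ 3 * T s s s := by
        simp [hu, map_smul]; ring
      have := hTbound u hnu
      rw [hTu, abs_mul, abs_of_nonneg (by positivity : (0:ℝ) ≤ ‖s‖⁻¹ ^ 3)] at this
      calc |T s s s| = ‖s‖ ^ 3 * (‖s‖⁻¹ ^ 3 * |T s s s|) := by
            field_simp
        _ ≤ ‖s‖ ^ 3 * L_H := by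
            exact mul_le_mul_of_nonneg_left this (by positivity)
        _ = L_H * ‖s‖ ^ 3 := by ring
  have key : ∀ s : EuclideanSpace ℝ (Fin n), s ≠ 0 →
      ptilde / 2 * ‖s‖ ^ 2 - L_H / 6 * ‖s‖ ^ 3 + σ * d / 4 * ‖s‖ ^ 4 > 0 := by
    intro s hs
    have hns : (0:ℝ) < ‖s‖ := norm_pos_iff.mpr hs
    nlinarith [sq_nonneg (3 * (σ * d) * ‖s‖ ^ 2 - L_H * ‖s‖),
      mul_pos (mul_pos hσ hd0) (pow_pos hns 2), sq_nonneg ‖s‖,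
      mul_pos hp (pow_pos hns 2), mul_pos (mul_pos hσ hd0) hp]
  intro s
  by_cases hs : s = 0
  · subst hs
    simp [hM, hMplus, hMminus]
  · have hT := hTb s
    have h1 := key s hs
    have habs₁ : T s s s ≤ L_H * ‖s‖ ^ 3 := (abs_le.mp hT).2
    have habs₂ : -(L_H * ‖s‖ ^ 3) ≤ T s s s := (abs_le.mp hT).1
    have hlt1 : Mminus s < M s := by
      rw [hM, hMminus]; nlinarith
    have hlt2 : M s < Mplus s := by
      rw [hM, hMplus]; nlinarith
    exact ⟨hlt1.le, hlt2.le, fun _ => ⟨hlt1, hlt2⟩⟩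
end

section
/- Let M₊(s) = f + gᵀs + (α₁/2) sᵀHs + (σα₂/4)‖s‖⁴ with α₁, α₂, σ > 0, and suppose λ_min(H) ≤ −λ_c for some λ_c > 0. If s₊ is a global minimizer of M₊, then gᵀs₊ + (α₁/2) s₊ᵀHs₊ ≤ (α₁/2) λ_min(H) ‖s₊‖² ≤ −(α₁/2) λ_c ‖s₊‖². -/
open scoped RealInnerProductSpace

/-- if `λ_min(H) ≤ −λ_c < 0` with unit eigenvector `v₁` (sign
chosen so that `gᵀv₁ ≤ 0`) and `s₊` is a global minimizer of
`M₊(s) = f + gᵀs + (α₁/2)sᵀHs + (σα₂/4)‖s‖⁴`, then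
`gᵀs₊ + (α₁/2)s₊ᵀHs₊ ≤ (α₁/2)λ_min(H)‖s₊‖² ≤ −(α₁/2)λ_c‖s₊‖²`. -/
theorem nonconvex_minimizer_bound (n : ℕ) (f σ α₁ α₂ lam_c lam_min : ℝ)
    (hσ : 0 < σ) (hα₁ : 0 < α₁) (hα₂ : 0 < α₂) (hlamc : 0 < lam_c)
    (g v₁ : EuclideanSpace ℝ (Fin n))
    (H : EuclideanSpace ℝ (Fin n) →L[ℝ] EuclideanSpace ℝ (Fin n))
    (hH : ∀ x y, ⟪H x, y⟫ = ⟪x, H y⟫)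
    (hv₁ : ‖v₁‖ = 1) (heig : H v₁ = lam_min • v₁)
    (hlam_min : lam_min ≤ -lam_c) (hsign : ⟪g, v₁⟫ ≤ 0)
    (Mplus : EuclideanSpace ℝ (Fin n) → ℝ)
    (hMplus : ∀ s, Mplus s = f + ⟪g, s⟫ + (α₁/2) * ⟪s, H s⟫
        + (σ * α₂/4) * ‖s‖^4)
    (splus : EuclideanSpace ℝ (Fin n))
    (hmin : ∀ s, Mplus splus ≤ Mplus s) :
    ⟪g, splus⟫ + (α₁/2) * ⟪splus, H splus⟫ ≤ (α₁/2) * lam_min * ‖splus‖^2 ∧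
    (α₁/2) * lam_min * ‖splus‖^2 ≤ -((α₁/2) * lam_c * ‖splus‖^2) := by

  set r := ‖splus‖ with hr
  have hr0 : 0 ≤ r := norm_nonneg _
  have key := hmin (r • v₁)
  rw [hMplus, hMplus] at key
  have h1 : ⟪g, r • v₁⟫ = r * ⟪g, v₁⟫ := real_inner_smul_right _ _ _
  have h2 : ⟪r • v₁, H (r • v₁)⟫ = r^2 * lam_min := by
    rw [map_smul, heig, real_inner_smul_right, real_inner_smul_left,
      real_inner_smul_right, real_inner_self_eq_norm_sq, hv₁]
    ring
  have h3 : ‖r • v₁‖ = r := by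
    rw [norm_smul, hv₁, Real.norm_eq_abs, abs_of_nonneg hr0, mul_one]
  rw [h1, h2, h3] at key
  have hgs : r * ⟪g, v₁⟫ ≤ 0 := mul_nonpos_of_nonneg_of_nonpos hr0 hsign
  constructor
  · nlinarith [key]
  · nlinarith [mul_le_mul_of_nonneg_left hlam_min (mul_nonneg (le_of_lt (half_pos hα₁)) (sq_nonneg r))]
end

section
/- Uniqueness of Nesterov's rate constant: the equation (3τ − 1)/(3τ + 1) = ((1 − 2τ)/(1 + 2τ))^{1/3} on the interval (1/3, 1/2) has the unique solution τ = (1/6)√(3 + √33). -/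
lemma cube_of_rpow_third (x : ℝ) (hx : 0 ≤ x) : (x ^ ((1:ℝ)/3)) ^ 3 = x := by
  rw [← Real.rpow_natCast (x ^ ((1:ℝ)/3)) 3, ← Real.rpow_mul hx]
  norm_num

lemma rpow_third_of_cube (a x : ℝ) (ha : 0 ≤ a) (h : a ^ 3 = x) :
    a = x ^ ((1:ℝ)/3) := by
  rw [← h, ← Real.rpow_natCast a 3, ← Real.rpow_mul ha]
  norm_num

/-- on `(1/3, 1/2)` the equation
`(3τ−1)/(3τ+1) = ((1−2τ)/(1+2τ))^{1/3}` has the unique solution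
`τ = (1/6)√(3+√33)`. -/
theorem nesterov_rate_constant_unique :
    Real.sqrt (3 + Real.sqrt 33) / 6 ∈ Set.Ioo (1/3 : ℝ) (1/2) ∧
    ∀ τ ∈ Set.Ioo (1/3 : ℝ) (1/2),
      ((3*τ - 1)/(3*τ + 1) = ((1 - 2*τ)/(1 + 2*τ)) ^ ((1:ℝ)/3)
        ↔ τ = Real.sqrt (3 + Real.sqrt 33) / 6) := by
  set s := Real.sqrt 33 with hs_def
  have hs2 : s ^ 2 = 33 := Real.sq_sqrt (by norm_num)
  have hs5 : (5:ℝ) < s := by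
    nlinarith [Real.sqrt_nonneg (33:ℝ)]
  have hs6 : s < 6 := by
    nlinarith [Real.sqrt_nonneg (33:ℝ)]
  have h3s : (0:ℝ) ≤ 3 + s := by linarith
  have ht2 : (Real.sqrt (3 + s)) ^ 2 = 3 + s := Real.sq_sqrt h3s
  have htnn : 0 ≤ Real.sqrt (3 + s) := Real.sqrt_nonneg _
  have hmem : Real.sqrt (3 + s) / 6 ∈ Set.Ioo (1/3 : ℝ) (1/2) := by
    constructor
    · rw [lt_div_iff₀ (by norm_num : (0:ℝ) < 6)]
      nlinarith
    · rw [div_lt_iff₀ (by norm_num : (0:ℝ) < 6)]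
      nlinarith
  refine ⟨hmem, ?_⟩
  intro τ hτ
  obtain ⟨h1, h2⟩ := hτ
  have hd1 : (0:ℝ) < 3*τ + 1 := by linarith
  have hd2 : (0:ℝ) < 1 + 2*τ := by linarith
  have hn1 : (0:ℝ) < 3*τ - 1 := by linarith
  have hn2 : (0:ℝ) < 1 - 2*τ := by linarith
  have hbnn : (0:ℝ) ≤ (1 - 2*τ)/(1 + 2*τ) := le_of_lt (div_pos hn2 hd2)
  constructor
  · intro h
    -- cube both sides
    have hcube : ((3*τ - 1)/(3*τ + 1)) ^ 3 = (1 - 2*τ)/(1 + 2*τ) := by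
      rw [h]; exact cube_of_rpow_third _ hbnn
    have hpoly : (3*τ - 1)^3 * (1 + 2*τ) = (1 - 2*τ) * (3*τ + 1)^3 := by
      have := hcube
      field_simp at this
      linarith [this]
    have h54 : 54 * τ^4 - 9 * τ^2 - 1 = 0 := by nlinarith [hpoly]
    -- factor: (36τ²-3-s)(36τ²-3+s) = 24(54τ⁴-9τ²-1)
    have hfac : (36*τ^2 - 3 - s) * (36*τ^2 - 3 + s) = 0 := by nlinarith
    have hpos : 36*τ^2 - 3 + s > 0 := by nlinarith
    have hτ2 : 36*τ^2 = 3 + s := by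
      rcases mul_eq_zero.mp hfac with h' | h'
      · linarith
      · linarith
    have : τ ^ 2 = (Real.sqrt (3 + s) / 6) ^ 2 := by
      rw [div_pow, ht2]; linarith
    nlinarith [this, htnn]
  · intro h
    subst h
    set τ := Real.sqrt (3 + s) / 6 with hτdef
    have hτsq : τ^2 = (3 + s)/36 := by
      rw [hτdef, div_pow, ht2]; norm_num
    have h4 : τ^4 = ((3+s)/36)^2 := by
      rw [show τ^4 = (τ^2)^2 from by ring, hτsq]
    clear_value τ
    have h54 : 54 * τ^4 - 9 * τ^2 - 1 = 0 := by
      rw [h4, hτsq]; linear_combination (1/24) * hs2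
    apply rpow_third_of_cube _ _ (le_of_lt (div_pos hn1 hd1))
    rw [div_pow, div_eq_div_iff (by positivity) hd2.ne']
    linear_combination (2 : ℝ) * h54
end
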